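/- arXiv:2511.16357 — 7 statements merged into one kernel-verified Lean document; each statement's English description precedes it below -/
import Mathlib

section
/- Let c ≥ 0 and P > c be real numbers, and let ψ, R : ℝ → ℝ be functions differentiable on [c, P] with ψ(x) > 0 and R(x) > 0 for all x ∈ [c, P]. Suppose ψ is strictly decreasing (ψ'(x) < 0), R'(x) = k for a constant k ≥ 0 (equal to the sum ∑_{h}(1 − 1/n^t_{≥h}) of pool-share coefficients), and the hazard-rate condition −ψ'(x)/ψ(x) ≥ k/R(x) holds for all x ∈ [c, P]. Then the expected payoff E(x) = ψ(x)·R(x) satisfies E'(x) ≤ 0 on [c, P], so E is maximized over [c, P] at x = c. In particular, reporting the true cost ĉ_s = c_s maximizes the provider's expected payoff under any cheapest matching algorithm. -/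
/-! Multiplying the hazard-rate bound `k / R ≤ -ψ' / ψ` by `ψ R > 0` gives
`(ψ R)' = ψ' R + ψ k ≤ 0`, so the expected payoff `ψ R` is antitone on `[c, P]` and attains
its maximum at the left endpoint, the true cost. -/

open Set

lemma mul_deriv_nonpos_of_hazard {a b a' b' : ℝ} (ha : 0 < a) (hb : 0 < b)
    (hhazard : b' / b ≤ -a' / a) : a' * b + a * b' ≤ 0 := by
  rw [div_le_div_iff₀ hb ha] at hhazard
  linarith

lemma antitoneOn_Icc_of_hasDerivWithinAt_nonpos {f f' : ℝ → ℝ} {a b : ℝ}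
    (hf : ∀ x ∈ Icc a b, HasDerivWithinAt f (f' x) (Icc a b) x)
    (hf' : ∀ x ∈ Icc a b, f' x ≤ 0) : AntitoneOn f (Icc a b) :=
  antitoneOn_of_hasDerivWithinAt_nonpos (convex_Icc a b)
    (fun x hx => (hf x hx).continuousWithinAt)
    (fun x hx => (hf x (interior_subset hx)).mono interior_subset)
    (fun x hx => hf' x (interior_subset hx))

theorem truthful_report_optimal_general (c P : ℝ) (hcP : c < P)
    (ψ R ψ' R' : ℝ → ℝ) (k : ℝ)
    (hψdiff : ∀ x ∈ Set.Icc c P, HasDerivWithinAt ψ (ψ' x) (Set.Icc c P) x)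
    (hRdiff : ∀ x ∈ Set.Icc c P, HasDerivWithinAt R (R' x) (Set.Icc c P) x)
    (hψpos : ∀ x ∈ Set.Icc c P, 0 < ψ x)
    (hRpos : ∀ x ∈ Set.Icc c P, 0 < R x)
    (hR' : ∀ x ∈ Set.Icc c P, R' x = k)
    (hhazard : ∀ x ∈ Set.Icc c P, k / R x ≤ -ψ' x / ψ x) :
    (∀ x ∈ Set.Icc c P, ψ' x * R x + ψ x * R' x ≤ 0) ∧
    (∀ x ∈ Set.Icc c P, ψ x * R x ≤ ψ c * R c) := by
  have hderiv : ∀ x ∈ Icc c P, ψ' x * R x + ψ x * R' x ≤ 0 := fun x hx =>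
    mul_deriv_nonpos_of_hazard (hψpos x hx) (hRpos x hx) (hR' x hx ▸ hhazard x hx)
  have hanti : AntitoneOn (fun y => ψ y * R y) (Icc c P) :=
    antitoneOn_Icc_of_hasDerivWithinAt_nonpos (fun x hx => (hψdiff x hx).mul (hRdiff x hx))
      hderiv
  exact ⟨hderiv, fun x hx => hanti (left_mem_Icc.mpr hcP.le) hx hx.1⟩

/-- under the hazard-rate (matching-competitiveness) condition, the
expected payoff `E = ψ · R` is nonincreasing on `[c, P]` and is therefore maximized
at the true cost `c`: reporting the true cost maximizes expected payoff. -/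
theorem truthful_report_optimal (c P : ℝ) (hc : 0 ≤ c) (hcP : c < P)
    (ψ R ψ' R' : ℝ → ℝ) (k : ℝ) (hk : 0 ≤ k)
    (hψdiff : ∀ x ∈ Set.Icc c P, HasDerivWithinAt ψ (ψ' x) (Set.Icc c P) x)
    (hRdiff : ∀ x ∈ Set.Icc c P, HasDerivWithinAt R (R' x) (Set.Icc c P) x)
    (hψpos : ∀ x ∈ Set.Icc c P, 0 < ψ x)
    (hRpos : ∀ x ∈ Set.Icc c P, 0 < R x)
    (hψdec : ∀ x ∈ Set.Icc c P, ψ' x < 0)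
    (hR' : ∀ x ∈ Set.Icc c P, R' x = k)
    (hhazard : ∀ x ∈ Set.Icc c P, k / R x ≤ -ψ' x / ψ x) :
    (∀ x ∈ Set.Icc c P, ψ' x * R x + ψ x * R' x ≤ 0) ∧
    (∀ x ∈ Set.Icc c P, ψ x * R x ≤ ψ c * R c) :=
  truthful_report_optimal_general c P hcP ψ R ψ' R' k hψdiff hRdiff hψpos hRpos hR' hhazard
end

section
/- Let B > 0 be a real budget, T ∈ ℕ a deadline, w₀ ∈ ℕ a minimum viable run length (w₀ ≥ 1), and v : ℕ → ℝ with v(0) = 0, v increasing, and discretely concave (Δ(w) := v(w) − v(w−1) nonincreasing in w ≥ 1). For a price P > 0 define U(P) = min(⌊B/P⌋, T), define h(P) as the largest m ∈ ℕ such that Δ(w) ≥ P for all 1 ≤ w ≤ m (with h(P) = 0 if Δ(1) < P; assume Δ(w) < P' for some w so these maxima are finite), and define the chosen hours w*(P) = 0 if ⌊B/P⌋ < w₀ or max_{w ∈ {w₀,…,U(P)}} (v(w) − P·w) ≤ 0, and w*(P) = min(⌊B/P⌋, max(w₀, h(P))) otherwise. Then for all 0 < P' < P: ⌊B/P'⌋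 ≥ ⌊B/P⌋, h(P') ≥ h(P), w*(P') ≥ w*(P), and w*(P) > 0 implies w*(P') > 0. Thus a lower price weakly increases both the probability of submission and the chosen job length. -/
open scoped Classical

/-- Discrete marginal gain `Δ(w) = v(w) - v(w-1)`. -/
noncomputable def margGain (v : ℕ → ℝ) (w : ℕ) : ℝ := v w - v (w - 1)

/-- `h(P)`: the largest `m` such that `Δ(w) ≥ P` for all `1 ≤ w ≤ m`
(equal to `0` if `Δ(1) < P`). -/
noncomputable def hCount (v : ℕ → ℝ) (P : ℝ) : ℕ :=
  sSup {m : ℕ | ∀ w : ℕ, 1 ≤ w → w ≤ m → P ≤ margGain v w}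

/-- `⌊B/P⌋`. -/
noncomputable def floorHours (B P : ℝ) : ℕ := ⌊B / P⌋₊

/-- `U(P) = min(⌊B/P⌋, T)`. -/
noncomputable def maxHours (B : ℝ) (T : ℕ) (P : ℝ) : ℕ := min (floorHours B P) T

/-- The chosen hours `w*(P)`. -/
noncomputable def chosenHours (B : ℝ) (T w₀ : ℕ) (v : ℕ → ℝ) (P : ℝ) : ℕ :=
  if floorHours B P < w₀ ∨ ∀ w ∈ Finset.Icc w₀ (maxHours B T P), v w - P * (w : ℝ) ≤ 0
  then 0
  else min (floorHours B P) (max w₀ (hCount v P))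

/-! Lowering the price moves every ingredient of `w*` the same way: `B / P` grows, the set of
`m` with `Δ ≥ P` on `[1, m]` grows, and on the (larger) feasible range each surplus
`v w - P w` grows, so a user who enters at `P` still enters at `P' < P`. -/

section PriceMonotonicity

variable {B P P' : ℝ}

theorem floorHours_le_floorHours (hP' : 0 < P') (hPP : P' ≤ P) :
    floorHours B P ≤ floorHours B P' := by
  rcases le_or_gt B 0 with hB | hB
  · rw [floorHours, Nat.floor_of_nonpos (div_nonpos_of_nonpos_of_nonneg hB (hP'.le.trans hPP))]
    exact Nat.zero_le _
  · exact Nat.floor_le_floor (div_le_div_of_nonneg_left hB.le hP' hPP)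

theorem hCount_le_hCount {v : ℕ → ℝ} (hPP : P' ≤ P)
    (hfin : ∃ w : ℕ, 1 ≤ w ∧ margGain v w < P') :
    hCount v P ≤ hCount v P' := by
  obtain ⟨w₁, hw₁, hlt⟩ := hfin
  have hbdd : BddAbove {m : ℕ | ∀ w : ℕ, 1 ≤ w → w ≤ m → P' ≤ margGain v w} :=
    ⟨w₁, fun m hm => le_of_not_gt fun hm_gt => (hm w₁ hw₁ hm_gt.le).not_gt hlt⟩
  have hzero : (0 : ℕ) ∈ {m : ℕ | ∀ w : ℕ, 1 ≤ w → w ≤ m → P ≤ margGain v w} :=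
    fun w h1 h2 => by omega
  exact csSup_le_csSup hbdd ⟨0, hzero⟩ fun m hm w h1 h2 => hPP.trans (hm w h1 h2)

theorem declines_of_declines_of_le {T w₀ : ℕ} {v : ℕ → ℝ} (hP' : 0 < P') (hPP : P' ≤ P)
    (h : floorHours B P' < w₀ ∨ ∀ w ∈ Finset.Icc w₀ (maxHours B T P'), v w - P' * (w : ℝ) ≤ 0) :
    floorHours B P < w₀ ∨ ∀ w ∈ Finset.Icc w₀ (maxHours B T P), v w - P * (w : ℝ) ≤ 0 := by
  have hfloor := floorHours_le_floorHours (B := B) hP' hPP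
  refine h.imp hfloor.trans_lt fun hsurplus w hw => ?_
  have hw' : w ∈ Finset.Icc w₀ (maxHours B T P') :=
    Finset.Icc_subset_Icc le_rfl (min_le_min_right T hfloor) hw
  have hcost : P' * (w : ℝ) ≤ P * w := mul_le_mul_of_nonneg_right hPP w.cast_nonneg
  linarith [hsurplus w hw']

theorem chosenHours_le_chosenHours {T w₀ : ℕ} {v : ℕ → ℝ} (hP' : 0 < P') (hPP : P' ≤ P)
    (hfin : ∃ w : ℕ, 1 ≤ w ∧ margGain v w < P') :
    chosenHours B T w₀ v P ≤ chosenHours B T w₀ v P' := by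
  unfold chosenHours
  split_ifs with hdecl hdecl' hdecl'
  · exact Nat.zero_le _
  · exact Nat.zero_le _
  · exact absurd (declines_of_declines_of_le hP' hPP hdecl') hdecl
  · exact min_le_min (floorHours_le_floorHours hP' hPP)
      (max_le_max le_rfl (hCount_le_hCount hPP hfin))

end PriceMonotonicity

theorem user_monotone_comparative_statics_general
    (B : ℝ) (T w₀ : ℕ) (v : ℕ → ℝ) (P P' : ℝ)
    (hfin : ∃ w : ℕ, 1 ≤ w ∧ margGain v w < P')
    (hP' : 0 < P') (hPP : P' < P) :
    floorHours B P ≤ floorHours B P' ∧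
    hCount v P ≤ hCount v P' ∧
    chosenHours B T w₀ v P ≤ chosenHours B T w₀ v P' ∧
    (0 < chosenHours B T w₀ v P → 0 < chosenHours B T w₀ v P') := by
  have hchosen := chosenHours_le_chosenHours (B := B) (T := T) (w₀ := w₀) hP' hPP.le hfin
  exact ⟨floorHours_le_floorHours hP' hPP.le, hCount_le_hCount hPP.le hfin, hchosen,
    fun hpos => hpos.trans_le hchosen⟩

/-- monotone comparative statics for a single user. A lower price
weakly increases the budget-feasible hours, the price-clearing marginal count,
the chosen job length, and the event of submission. -/
theorem user_monotone_comparative_statics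
    (B : ℝ) (T w₀ : ℕ) (v : ℕ → ℝ) (P P' : ℝ)
    (hB : 0 < B) (hw₀ : 1 ≤ w₀) (hv0 : v 0 = 0) (hvmono : StrictMono v)
    (hconc : ∀ w : ℕ, 1 ≤ w → margGain v (w + 1) ≤ margGain v w)
    (hfin : ∃ w : ℕ, 1 ≤ w ∧ margGain v w < P')
    (hP' : 0 < P') (hPP : P' < P) :
    floorHours B P ≤ floorHours B P' ∧
    hCount v P ≤ hCount v P' ∧
    chosenHours B T w₀ v P ≤ chosenHours B T w₀ v P' ∧
    (0 < chosenHours B T w₀ v P → 0 < chosenHours B T w₀ v P') :=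
  user_monotone_comparative_statics_general B T w₀ v P P' hfin hP' hPP
end

section
/- Fix reals P_f > 0, b_max ≥ P_f, and S_f > 0 (the floor supply). Let D : [P_f, ∞) → (0, ∞) be continuous and nonincreasing, and let f : [1, ∞) → [P_f, b_max] be continuous and strictly increasing. Define the load α(P) = max(1, D(P)/S_f). Then: (i) α is nonincreasing in P; and (ii) there exists a unique P* ∈ [P_f, b_max] satisfying the fixed-point equation P* = f(α(P*)). -/
/-!
The load `α(P) = max(1, D(P)/S_f)` is nonincreasing because `D` is, so `P ↦ f(α(P))` is an
antitone continuous self-map of `[P_f, b_max]`. The intermediate value theorem gives a fixed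
point, and an antitone map has at most one: if `x < y` were both fixed, then
`y = g y ≤ g x = x`.
-/

open Set Function

theorem AntitoneOn.max_div_const {s : Set ℝ} {D : ℝ → ℝ} (hD : AntitoneOn D s) (c : ℝ)
    {S : ℝ} (hS : 0 ≤ S) : AntitoneOn (fun x => max c (D x / S)) s :=
  fun _ ha _ hb hab => max_le_max le_rfl (div_le_div_of_nonneg_right (hD ha hb hab) hS)

theorem AntitoneOn.eq_of_isFixedPt {α : Type*} [LinearOrder α] {g : α → α} {s : Set α}
    (hg : AntitoneOn g s) {x y : α} (hx : x ∈ s) (hy : y ∈ s)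
    (hgx : IsFixedPt g x) (hgy : IsFixedPt g y) : x = y := by
  wlog hxy : x ≤ y generalizing x y
  · exact (this hy hx hgy hgx (le_of_not_ge hxy)).symm
  refine le_antisymm hxy ?_
  calc y = g y := hgy.eq.symm
    _ ≤ g x := hg hx hy hxy
    _ = x := hgx.eq

theorem existsUnique_mem_Icc_isFixedPt_of_antitoneOn {α : Type*}
    [ConditionallyCompleteLinearOrder α] [TopologicalSpace α] [OrderTopology α]
    [DenselyOrdered α] {a b : α} {g : α → α} (hle : a ≤ b) (hg : ContinuousOn g (Icc a b))
    (hanti : AntitoneOn g (Icc a b)) (hmaps : MapsTo g (Icc a b) (Icc a b)) :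
    ∃! x, x ∈ Icc a b ∧ IsFixedPt g x := by
  obtain ⟨x, hx, hgx⟩ := exists_mem_Icc_isFixedPt_of_mapsTo hg hle hmaps
  exact ⟨x, ⟨hx, hgx⟩, fun y ⟨hy, hgy⟩ => hanti.eq_of_isFixedPt hy hx hgy hgx⟩

theorem equilibrium_quote_exists_unique_general
    (P_f b_max S_f : ℝ) (hb : P_f ≤ b_max) (hSf : 0 < S_f)
    (D : ℝ → ℝ)
    (hDcont : ContinuousOn D (Set.Ici P_f))
    (hDanti : AntitoneOn D (Set.Ici P_f))
    (f : ℝ → ℝ) (hfcont : ContinuousOn f (Set.Ici 1))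
    (hfmono : StrictMonoOn f (Set.Ici 1))
    (hfrange : ∀ α : ℝ, 1 ≤ α → f α ∈ Set.Icc P_f b_max) :
    AntitoneOn (fun P => max 1 (D P / S_f)) (Set.Ici P_f) ∧
    ∃! P : ℝ, P ∈ Set.Icc P_f b_max ∧ P = f (max 1 (D P / S_f)) := by
  set load : ℝ → ℝ := fun P => max 1 (D P / S_f)
  have hload_ge : ∀ P, 1 ≤ load P := fun P => le_max_left _ _
  have hload_anti : AntitoneOn load (Ici P_f) := hDanti.max_div_const 1 hSf.le
  have hload_cont : ContinuousOn load (Ici P_f) := continuousOn_const.sup (hDcont.div_const S_f)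
  have hg_anti : AntitoneOn (f ∘ load) (Icc P_f b_max) := fun _ hx _ hy hxy =>
    hfmono.monotoneOn (hload_ge _) (hload_ge _) (hload_anti hx.1 hy.1 hxy)
  have hg_cont : ContinuousOn (f ∘ load) (Icc P_f b_max) :=
    hfcont.comp (hload_cont.mono Icc_subset_Ici_self) fun P _ => hload_ge P
  have hg_maps : MapsTo (f ∘ load) (Icc P_f b_max) (Icc P_f b_max) :=
    fun P _ => hfrange _ (hload_ge P)
  refine ⟨hload_anti, ?_⟩
  exact (existsUnique_congr fun P => and_congr_right' eq_comm).mp <|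
    existsUnique_mem_Icc_isFixedPt_of_antitoneOn hb hg_cont hg_anti hg_maps

/-- the load `α(P) = max(1, D(P)/S_f)` is nonincreasing in `P`, and
there is a unique equilibrium quote `P* ∈ [P_f, b_max]` solving the fixed-point
equation `P* = f(α(P*))`. -/
theorem equilibrium_quote_exists_unique
    (P_f b_max S_f : ℝ) (hPf : 0 < P_f) (hb : P_f ≤ b_max) (hSf : 0 < S_f)
    (D : ℝ → ℝ) (hDpos : ∀ P : ℝ, P_f ≤ P → 0 < D P)
    (hDcont : ContinuousOn D (Set.Ici P_f))
    (hDanti : AntitoneOn D (Set.Ici P_f))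
    (f : ℝ → ℝ) (hfcont : ContinuousOn f (Set.Ici 1))
    (hfmono : StrictMonoOn f (Set.Ici 1))
    (hfrange : ∀ α : ℝ, 1 ≤ α → f α ∈ Set.Icc P_f b_max) :
    AntitoneOn (fun P => max 1 (D P / S_f)) (Set.Ici P_f) ∧
    ∃! P : ℝ, P ∈ Set.Icc P_f b_max ∧ P = f (max 1 (D P / S_f)) :=
  equilibrium_quote_exists_unique_general P_f b_max S_f hb hSf D hDcont hDanti f hfcont hfmono
    hfrange
end

section
/- Let providers s_1, …, s_m have nondecreasing availabilities τ_1 ≤ ⋯ ≤ τ_m and let D be a set of n jobs with lengths w_d. For each job d let t(d) = min{i : τ_i ≥ w_d} if a feasible provider exists and t(d) = m+1 otherwise, so the feasible providers for d are exactly {i : i ≥ t(d)}. For 1 ≤ i ≤ m+1 define the suffix sets S_{≥i} = {i, …, m} and D_{≥i} = {d ∈ D : t(d) ≥ i}, and the deficiency Δ = max_{1 ≤ i ≤ m+1} (|D_{≥i}| − |S_{≥i}|)₊ (positive part). Then the maximum cardinality of a matching contained in the feasibility relation E = {(i,d) : τ_i ≥ w_d} equals n − Δ. -/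
/-- A matching: a set of provider–job pairs in which each provider and each job
appears at most once. -/
def IsMatching {m : ℕ} {J : Type*} (M : Finset (Fin m × J)) : Prop :=
  (∀ p ∈ M, ∀ q ∈ M, p.1 = q.1 → p = q) ∧ (∀ p ∈ M, ∀ q ∈ M, p.2 = q.2 → p = q)

/-- `t(d)`: the least (0-indexed) provider index feasible for a job of length `wd`,
or `m` if none is feasible (so that `m` plays the role of `m+1` of the 1-indexed
statement). -/
noncomputable def tIdx {m : ℕ} (τ : Fin m → ℕ) (wd : ℕ) : ℕ :=
  sInf {i : ℕ | i = m ∨ ∃ h : i < m, wd ≤ τ ⟨i, h⟩}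

/-- The deficiency `Δ = max_i (|D_{≥i}| − |S_{≥i}|)₊` (0-indexed, `i` ranges over
`0, …, m`, `|S_{≥i}| = m − i`; the positive part is ℕ-truncated subtraction). -/
noncomputable def deficiency {m n : ℕ} (τ : Fin m → ℕ) (w : Fin n → ℕ) : ℕ :=
  (Finset.range (m + 1)).sup fun i =>
    (Finset.univ.filter fun d : Fin n => i ≤ tIdx τ (w d)).card - (m - i)

lemma tIdx_le {m : ℕ} (τ : Fin m → ℕ) (wd : ℕ) : tIdx τ wd ≤ m :=
  Nat.sInf_le (Or.inl rfl)

lemma tIdx_le_of_feasible {m : ℕ} (τ : Fin m → ℕ) (wd : ℕ) (p : Fin m) (h : wd ≤ τ p) :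
    tIdx τ wd ≤ p.1 :=
  Nat.sInf_le (Or.inr ⟨p.2, by simpa using h⟩)

lemma feasible_of_tIdx_le {m : ℕ} (τ : Fin m → ℕ) (hτ : Monotone τ) (wd : ℕ) (p : Fin m)
    (h : tIdx τ wd ≤ p.1) : wd ≤ τ p := by
  have hne : {i : ℕ | i = m ∨ ∃ h : i < m, wd ≤ τ ⟨i, h⟩}.Nonempty := ⟨m, Or.inl rfl⟩
  have hmem := Nat.sInf_mem hne
  rcases hmem with h1 | ⟨hlt, hle⟩
  · have := p.2; rw [tIdx] at h; omega
  · refine hle.trans (hτ ?_)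
    rw [Fin.le_def]
    exact h

lemma card_filter_le_val (m i : ℕ) :
    (Finset.univ.filter fun p : Fin m => i ≤ (p : ℕ)).card = m - i := by
  rw [← Nat.card_Ico i m]
  refine Finset.card_bij (fun p _ => (p : ℕ)) ?_ ?_ ?_
  · intro a ha
    simp only [Finset.mem_filter, Finset.mem_univ, true_and] at ha
    simp [Finset.mem_Ico, ha, a.2]
  · intro a _ b _ hab
    exact Fin.val_injective hab
  · intro b hb
    simp only [Finset.mem_Ico] at hb
    exact ⟨⟨b, hb.2⟩, by simp [hb.1], rfl⟩

lemma deficiency_le {m n : ℕ} (τ : Fin m → ℕ) (w : Fin n → ℕ) : deficiency τ w ≤ n := by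
  apply Finset.sup_le
  intro i _
  have := Finset.card_filter_le (Finset.univ : Finset (Fin n))
      (fun d => i ≤ tIdx τ (w d))
  have h2 : (Finset.univ : Finset (Fin n)).card = n := by simp
  omega

/-- Upper bound: any feasible matching has at most `n - Δ` edges. -/
lemma matching_card_le {m n : ℕ} (τ : Fin m → ℕ) (w : Fin n → ℕ)
    (M : Finset (Fin m × Fin n)) (hM : IsMatching M) (hfeas : ∀ p ∈ M, w p.2 ≤ τ p.1) :
    M.card ≤ n - deficiency τ w := by
  classical
  rw [Nat.le_sub_iff_add_le (deficiency_le τ w)]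
  obtain ⟨i, hi, hieq⟩ := Finset.exists_mem_eq_sup (Finset.range (m + 1)) (by simp)
    (fun i => (Finset.univ.filter fun d : Fin n => i ≤ tIdx τ (w d)).card - (m - i))
  rw [Finset.mem_range] at hi
  have hΔeq : deficiency τ w
      = (Finset.univ.filter fun d : Fin n => i ≤ tIdx τ (w d)).card - (m - i) := hieq
  set Dge : Finset (Fin n) := Finset.univ.filter fun d => i ≤ tIdx τ (w d) with hD
  set Mh : Finset (Fin m × Fin n) := M.filter fun p => i ≤ tIdx τ (w p.2) with hMh
  have h1 : Mh.card ≤ m - i := by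
    rw [← card_filter_le_val m i]
    apply Finset.card_le_card_of_injOn (fun p => p.1)
    · intro p hp
      simp only [hMh, Finset.mem_coe, Finset.mem_filter] at hp
      simp only [Finset.mem_coe, Finset.mem_filter, Finset.mem_univ, true_and]
      exact le_trans hp.2 (tIdx_le_of_feasible τ _ _ (hfeas p hp.1))
    · intro p hp q hq hpq
      simp only [hMh, Finset.mem_filter, Finset.mem_coe] at hp hq
      exact hM.1 p hp.1 q hq.1 hpq
  have h2 : (M \ Mh).card ≤ n - Dge.card := by
    have hcompl : (Finset.univ.filter fun d : Fin n => ¬ i ≤ tIdx τ (w d)).card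
        = n - Dge.card := by
      have := Finset.card_filter_add_card_filter_not
        (s := (Finset.univ : Finset (Fin n))) (p := fun d => i ≤ tIdx τ (w d))
      have h2 : (Finset.univ : Finset (Fin n)).card = n := by simp
      rw [hD]; omega
    rw [← hcompl]
    apply Finset.card_le_card_of_injOn (fun p => p.2)
    · intro p hp
      simp only [hMh, Finset.mem_coe, Finset.mem_sdiff, Finset.mem_filter] at hp
      simp only [Finset.mem_coe, Finset.mem_filter, Finset.mem_univ, true_and]
      exact fun h => hp.2 ⟨hp.1, h⟩
    · intro p hp q hq hpq
      simp only [Finset.mem_coe, Finset.mem_sdiff] at hp hq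
      exact hM.2 p hp.1 q hq.1 hpq
  have h3 : (M \ Mh).card = M.card - Mh.card :=
    Finset.card_sdiff_of_subset (hMh ▸ Finset.filter_subset _ M)
  have h5 : Mh.card ≤ M.card := hMh ▸ Finset.card_filter_le _ _
  have h6 : M.card ≤ n := by
    have : M.card ≤ (Finset.univ : Finset (Fin n)).card :=
      Finset.card_le_card_of_injOn (fun p => p.2) (fun p _ => Finset.mem_univ _)
        (fun p hp q hq => hM.2 p hp q hq)
    simpa using this
  have h4 : Dge.card ≤ n := by
    have := Finset.card_filter_le (Finset.univ : Finset (Fin n))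
      (fun d => i ≤ tIdx τ (w d))
    have h2 : (Finset.univ : Finset (Fin n)).card = n := by simp
    rw [hD]; omega
  omega

/-- the maximum cardinality of a matching contained in the
feasibility relation equals `n − Δ`, where `Δ` is the deficiency. -/
theorem max_feasible_matching_eq_n_sub_deficiency
    {m n : ℕ} (τ : Fin m → ℕ) (hτ : Monotone τ) (w : Fin n → ℕ) :
    sSup {k : ℕ | ∃ M : Finset (Fin m × Fin n), IsMatching M ∧
        (∀ p ∈ M, w p.2 ≤ τ p.1) ∧ k = M.card}
      = n - deficiency τ w := by
  classical
  set Δ := deficiency τ w with hΔ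
  set N : Fin n → Finset (Fin m ⊕ Fin Δ) :=
    fun d => (Finset.univ.filter fun p => w d ≤ τ p).disjSum Finset.univ with hN
  have hNcard : ∀ d, (N d).card = (m - tIdx τ (w d)) + Δ := by
    intro d
    rw [hN]
    simp only [Finset.card_disjSum, Finset.card_univ, Fintype.card_fin]
    congr 1
    rw [← card_filter_le_val m (tIdx τ (w d))]
    congr 1
    ext p
    simp only [Finset.mem_filter, Finset.mem_univ, true_and]
    constructor
    · intro h; exact tIdx_le_of_feasible τ _ _ h
    · intro h; exact feasible_of_tIdx_le τ hτ _ _ h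
  -- Hall's condition
  have hall : ∀ s : Finset (Fin n), s.card ≤ (s.biUnion N).card := by
    intro s
    rcases s.eq_empty_or_nonempty with rfl | hs
    · simp
    obtain ⟨d₀, hd₀, hmin⟩ := s.exists_min_image (fun d => tIdx τ (w d)) hs
    set i := tIdx τ (w d₀) with hi
    have him : i ≤ m := tIdx_le τ _
    have h1 : s.card ≤ (Finset.univ.filter fun d : Fin n => i ≤ tIdx τ (w d)).card := by
      apply Finset.card_le_card
      intro d hd
      simp only [Finset.mem_filter, Finset.mem_univ, true_and]
      exact hmin d hd
    have h2 : (Finset.univ.filter fun d : Fin n => i ≤ tIdx τ (w d)).card - (m - i) ≤ Δ := by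
      rw [hΔ, deficiency]
      exact Finset.le_sup
        (f := fun i => (Finset.univ.filter fun d : Fin n => i ≤ tIdx τ (w d)).card - (m - i))
        (Finset.mem_range.mpr (by omega))
    have h3 : (N d₀).card ≤ (s.biUnion N).card :=
      Finset.card_le_card (Finset.subset_biUnion_of_mem N hd₀)
    rw [hNcard d₀] at h3
    omega
  obtain ⟨f, hfinj, hfmem⟩ := (Finset.all_card_le_biUnion_card_iff_exists_injective N).mp hall
  -- extract the matching
  set M : Finset (Fin m × Fin n) :=
    Finset.univ.filterMap (fun d => ((f d).getLeft?).map fun p => (p, d))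
      (by
        intro a a' b hb hb'
        simp only [Option.mem_def, Option.map_eq_some_iff] at hb hb'
        obtain ⟨p, _, rfl⟩ := hb
        obtain ⟨q, _, hq⟩ := hb'
        exact (Prod.mk.injEq _ _ _ _ ▸ hq).2.symm ▸ rfl) with hMdef
  have hMmem : ∀ p : Fin m × Fin n, p ∈ M ↔ f p.2 = Sum.inl p.1 := by
    intro p
    rw [hMdef, Finset.mem_filterMap]
    constructor
    · rintro ⟨d, -, hd⟩
      simp only [Option.mem_def, Option.map_eq_some_iff] at hd
      obtain ⟨q, hq, hqd⟩ := hd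
      obtain ⟨rfl, rfl⟩ : q = p.1 ∧ d = p.2 := by
        rw [Prod.ext_iff] at hqd; exact ⟨hqd.1, hqd.2⟩
      exact Sum.getLeft?_eq_some_iff.mp hq
    · intro h
      exact ⟨p.2, Finset.mem_univ _, by simp [h]⟩
  have hMatch : IsMatching M := by
    constructor
    · intro p hp q hq hpq
      rw [hMmem] at hp hq
      have : f p.2 = f q.2 := by rw [hp, hq, hpq]
      exact Prod.ext hpq (hfinj this)
    · intro p hp q hq hpq
      rw [hMmem] at hp hq
      rw [hpq] at hp
      rw [hp] at hq
      exact Prod.ext (Sum.inl_injective hq) hpq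
  have hMfeas : ∀ p ∈ M, w p.2 ≤ τ p.1 := by
    intro p hp
    rw [hMmem] at hp
    have := hfmem p.2
    rw [hp, hN] at this
    simp only [Finset.inl_mem_disjSum, Finset.mem_filter, Finset.mem_univ, true_and] at this
    exact this
  -- lower bound on card
  have hMcard_ge : n - Δ ≤ M.card := by
    have himg : M.image Prod.snd = Finset.univ.filter fun d : Fin n => (f d).isLeft := by
      ext d
      simp only [Finset.mem_image, Finset.mem_filter, Finset.mem_univ, true_and]
      constructor
      · rintro ⟨p, hp, rfl⟩
        rw [hMmem] at hp
        rw [hp]; rfl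
      · intro h
        obtain ⟨p, hp⟩ := Sum.isLeft_iff.mp h
        exact ⟨(p, d), (hMmem (p, d)).mpr hp, rfl⟩
    have hcard1 : M.card = (Finset.univ.filter fun d : Fin n => (f d).isLeft).card := by
      rw [← himg]
      exact (Finset.card_image_of_injOn (fun p hp q hq hpq => hMatch.2 p hp q hq hpq)).symm
    have hR : (Finset.univ.filter fun d : Fin n => ¬ (f d).isLeft).card ≤ Δ := by
      calc (Finset.univ.filter fun d : Fin n => ¬ (f d).isLeft).card
          ≤ (Finset.univ.image (Sum.inr : Fin Δ → Fin m ⊕ Fin Δ)).card := by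
            apply Finset.card_le_card_of_injOn f
            · intro d hd
              simp only [Finset.mem_coe, Finset.mem_filter, Finset.mem_univ, true_and] at hd
              obtain ⟨j, hj⟩ := Sum.isRight_iff.mp (Sum.not_isLeft.mp hd)
              rw [hj]
              exact Finset.mem_image_of_mem _ (Finset.mem_univ j)
            · exact fun p _ q _ h => hfinj h
        _ ≤ (Finset.univ : Finset (Fin Δ)).card := Finset.card_image_le
        _ = Δ := by simp
    have hsplit := Finset.card_filter_add_card_filter_not
      (s := (Finset.univ : Finset (Fin n))) (p := fun d => (f d).isLeft)
    have huniv : (Finset.univ : Finset (Fin n)).card = n := by simp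
    omega
  have hMcard : M.card = n - Δ :=
    le_antisymm (matching_card_le τ w M hMatch hMfeas) hMcard_ge
  apply IsGreatest.csSup_eq
  constructor
  · exact ⟨M, hMatch, hMfeas, hMcard.symm⟩
  · rintro k ⟨M', hM', hfeas', rfl⟩
    exact matching_card_le τ w M' hM' hfeas'
end

section
/- Let c_1, …, c_m be real numbers with P_f ≤ c_i ≤ P for all i, and let 1 ≤ n ≤ m. For any n-element subset A of {1, …, m}, the sum of costs over A exceeds the minimum possible sum over any n-element subset by at most (P − P_f)·min(n, m − n); in particular the excess is at most ⌊m/2⌋·(P − P_f), it is at most (P − P_f)·n when n ≤ ⌊m/2⌋, at most (P − P_f)·(m − n) when ⌊m/2⌋ < n < m, and zero when n = m. Consequently, the S-regret of the Cheapest-Feasible Matching relative to the Greedy-Cheapest Matching in a period with price P > P_f, m providers and n jobs, is bounded by these quantities. -/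
/-!
Swapping one set for another of the same size changes the total only on the symmetric difference:
the `#(A \ B)` providers that leave cost at most `P` each, the equally many that join cost at least
`P_f` each. And `A \ B` lies both in `A` and in the complement of `B`, so it has at most
`min n (m - n)` elements.
-/

open Finset

namespace Finset

variable {ι : Type*} [DecidableEq ι]

theorem sum_sub_sum_le_mul_card_sdiff {R : Type*} [CommRing R] [PartialOrder R] [IsOrderedRing R]
    {s t : Finset ι} {c : ι → R} {a b : R} (hst : #s = #t)
    (hs : ∀ i ∈ s, c i ≤ b) (ht : ∀ i ∈ t, a ≤ c i) :
    ∑ i ∈ s, c i - ∑ i ∈ t, c i ≤ (b - a) * #(s \ t) := by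
  have hleave : ∑ i ∈ s \ t, c i ≤ #(s \ t) * b := by
    simpa only [nsmul_eq_mul] using
      sum_le_card_nsmul _ _ _ fun i hi => hs i (mem_sdiff.mp hi).1
  have hjoin : #(t \ s) * a ≤ ∑ i ∈ t \ s, c i := by
    simpa only [nsmul_eq_mul] using
      card_nsmul_le_sum _ _ _ fun i hi => ht i (mem_sdiff.mp hi).1
  rw [← card_sdiff_comm hst] at hjoin
  rw [← sum_sdiff_sub_sum_sdiff]
  linear_combination hleave + hjoin

theorem card_sdiff_le_min_card_card_compl [Fintype ι] (s t : Finset ι) :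
    #(s \ t) ≤ min #s (Fintype.card ι - #t) :=
  le_min (card_le_card sdiff_subset)
    (card_compl t ▸ card_le_card fun _ hi => mem_compl.mpr (mem_sdiff.mp hi).2)

end Finset

theorem s_regret_bounds_general {m : ℕ} (c : Fin m → ℝ) (P_f P : ℝ)
    (hc : ∀ i : Fin m, c i ∈ Set.Icc P_f P)
    (n : ℕ) (hn1 : 1 ≤ n)
    (A : Finset (Fin m)) (hA : A.card = n) :
    (∀ B : Finset (Fin m), B.card = n →
      (∑ i ∈ A, c i) - (∑ i ∈ B, c i) ≤ (P - P_f) * ((min n (m - n) : ℕ) : ℝ)) ∧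
    (∀ B : Finset (Fin m), B.card = n →
      (∑ i ∈ A, c i) - (∑ i ∈ B, c i) ≤ ((m / 2 : ℕ) : ℝ) * (P - P_f)) ∧
    (n ≤ m / 2 → ∀ B : Finset (Fin m), B.card = n →
      (∑ i ∈ A, c i) - (∑ i ∈ B, c i) ≤ (P - P_f) * (n : ℝ)) ∧
    (m / 2 < n → n < m → ∀ B : Finset (Fin m), B.card = n →
      (∑ i ∈ A, c i) - (∑ i ∈ B, c i) ≤ (P - P_f) * (((m - n : ℕ) : ℝ))) ∧
    (n = m → ∀ B : Finset (Fin m), B.card = n →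
      (∑ i ∈ A, c i) - (∑ i ∈ B, c i) = 0) := by
  obtain ⟨i₀, -⟩ := card_pos.mp (hA ▸ hn1)
  have hspread : 0 ≤ P - P_f := sub_nonneg.mpr ((hc i₀).1.trans (hc i₀).2)
  have hexcess : ∀ k : ℕ, min n (m - n) ≤ k → ∀ B : Finset (Fin m), #B = n →
      ∑ i ∈ A, c i - ∑ i ∈ B, c i ≤ (P - P_f) * k := by
    intro k hk B hB
    have hcard : #(A \ B) ≤ k := by
      have := card_sdiff_le_min_card_card_compl A B
      rw [hA, hB, Fintype.card_fin] at this
      exact this.trans hk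
    exact (sum_sub_sum_le_mul_card_sdiff (hA.trans hB.symm) (fun i _ => (hc i).2)
      fun i _ => (hc i).1).trans (mul_le_mul_of_nonneg_left (by exact_mod_cast hcard) hspread)
  refine ⟨hexcess _ le_rfl, fun B hB => ?_, fun _ => hexcess n (by omega),
    fun _ _ => hexcess (m - n) (by omega), fun hnm B hB => ?_⟩
  · simpa only [mul_comm] using hexcess (m / 2) (by omega) B hB
  · rw [eq_univ_of_card A (by simp [hA, hnm]), eq_univ_of_card B (by simp [hB, hnm]), sub_self]

/-- with all costs in `[P_f, P]`, the total cost of any `n`-element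
set of providers exceeds the minimum possible total over `n`-element sets by at
most `(P − P_f)·min(n, m−n)`; in particular by at most `⌊m/2⌋·(P − P_f)`, by at
most `(P − P_f)·n` when `n ≤ ⌊m/2⌋`, by at most `(P − P_f)·(m − n)` when
`⌊m/2⌋ < n < m`, and the excess is zero when `n = m`. These bound the S-regret of
Cheapest-Feasible Matching relative to Greedy-Cheapest Matching. -/
theorem s_regret_bounds {m : ℕ} (c : Fin m → ℝ) (P_f P : ℝ)
    (hc : ∀ i : Fin m, c i ∈ Set.Icc P_f P)
    (n : ℕ) (hn1 : 1 ≤ n) (hnm : n ≤ m)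
    (A : Finset (Fin m)) (hA : A.card = n) :
    (∀ B : Finset (Fin m), B.card = n →
      (∑ i ∈ A, c i) - (∑ i ∈ B, c i) ≤ (P - P_f) * ((min n (m - n) : ℕ) : ℝ)) ∧
    (∀ B : Finset (Fin m), B.card = n →
      (∑ i ∈ A, c i) - (∑ i ∈ B, c i) ≤ ((m / 2 : ℕ) : ℝ) * (P - P_f)) ∧
    (n ≤ m / 2 → ∀ B : Finset (Fin m), B.card = n →
      (∑ i ∈ A, c i) - (∑ i ∈ B, c i) ≤ (P - P_f) * (n : ℝ)) ∧
    (m / 2 < n → n < m → ∀ B : Finset (Fin m), B.card = n →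
      (∑ i ∈ A, c i) - (∑ i ∈ B, c i) ≤ (P - P_f) * (((m - n : ℕ) : ℝ))) ∧
    (n = m → ∀ B : Finset (Fin m), B.card = n →
      (∑ i ∈ A, c i) - (∑ i ∈ B, c i) = 0) :=
  s_regret_bounds_general c P_f P hc n hn1 A hA
end

section
/- Let providers be indexed by nondecreasing availability τ_1 ≤ ⋯ ≤ τ_m with arbitrary reported costs, each provider able to start at most one job in the period, and let n ≤ m jobs arrive online in an adversarial order. GSM matches each job to the leftmost unmatched feasible provider; CFM matches each job to an unmatched feasible provider of minimum reported cost, breaking ties toward the leftmost index; both reject a job when no unmatched feasible provider exists, and matches are irrevocable. Then the D-regret of CFM relative to GSM in the period satisfies R_D(M_CFM) = |M_GSM| − |M_CFM,feasible| ≤ ⌊n/2⌋, i.e., CFM feasibly matches at most ⌊n/2⌋ fewer jobs than GSM. Moreover this bound is tight up to the floor: under strictly anti-sorted costs an adversary can realize ⌊m/2⌋ units of regret. -/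
/-- GSM's choice: the unmatched feasible provider of least index (leftmost),
`none` if no unmatched feasible provider exists (rejection). -/
def gsmPick {m : ℕ} (τ : Fin m → ℕ) (used : Finset (Fin m)) (wd : ℕ) :
    Option (Fin m) :=
  let s := Finset.univ.filter fun i => i ∉ used ∧ wd ≤ τ i
  if h : s.Nonempty then some (s.min' h) else none

/-- CFM's choice: an unmatched feasible provider of minimum reported cost,
breaking ties toward the leftmost index; `none` if no unmatched feasible
provider exists (rejection). -/
noncomputable def cfmPick {m : ℕ} (τ : Fin m → ℕ) (c : Fin m → ℝ)
    (used : Finset (Fin m)) (wd : ℕ) : Option (Fin m) :=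
  let s := Finset.univ.filter fun i => i ∉ used ∧ wd ≤ τ i
  if h : s.Nonempty then
    some ((s.filter fun i => c i = s.inf' h c).min' (by
      obtain ⟨i, hi, hic⟩ := Finset.exists_mem_eq_inf' h c
      exact ⟨i, Finset.mem_filter.mpr ⟨hi, hic.symm⟩⟩))
  else none

/-- Online run of GSM on arrival sequence `ds` (irrevocable matches). -/
def gsmRunOn {m n : ℕ} (τ : Fin m → ℕ) (w : Fin n → ℕ) (ds : List (Fin n)) :
    Finset (Fin m × Fin n) :=
  ds.foldl (fun M d =>
    match gsmPick τ (M.image Prod.fst) (w d) with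
    | some i => insert (i, d) M
    | none => M) ∅

/-- Online run of CFM on arrival sequence `ds` (irrevocable matches). -/
noncomputable def cfmRunOn {m n : ℕ} (τ : Fin m → ℕ) (c : Fin m → ℝ)
    (w : Fin n → ℕ) (ds : List (Fin n)) : Finset (Fin m × Fin n) :=
  ds.foldl (fun M d =>
    match cfmPick τ c (M.image Prod.fst) (w d) with
    | some i => insert (i, d) M
    | none => M) ∅

/-- Number of feasibly matched jobs of a matching. -/
def feasCount {m n : ℕ} (τ : Fin m → ℕ) (w : Fin n → ℕ)
    (M : Finset (Fin m × Fin n)) : ℕ :=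
  (M.filter fun p => w p.2 ≤ τ p.1).card

lemma gsmPick_mem {m : ℕ} {τ : Fin m → ℕ} {used : Finset (Fin m)} {wd : ℕ} {i : Fin m}
    (h : gsmPick τ used wd = some i) : i ∉ used ∧ wd ≤ τ i := by
  unfold gsmPick at h
  by_cases hne : (Finset.univ.filter fun j => j ∉ used ∧ wd ≤ τ j).Nonempty
  · simp only [hne, dite_true, Option.some.injEq] at h
    have := Finset.min'_mem _ hne
    rw [h] at this
    simpa using this
  · simp [hne] at h

lemma cfmPick_mem {m : ℕ} {τ : Fin m → ℕ} {c : Fin m → ℝ} {used : Finset (Fin m)} {wd : ℕ}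
    {i : Fin m} (h : cfmPick τ c used wd = some i) : i ∉ used ∧ wd ≤ τ i := by
  unfold cfmPick at h
  by_cases hne : (Finset.univ.filter fun j => j ∉ used ∧ wd ≤ τ j).Nonempty
  · simp only [hne, dite_true, Option.some.injEq] at h
    have hmem : i ∈ (Finset.univ.filter fun j => j ∉ used ∧ wd ≤ τ j).filter
        (fun j => c j = (Finset.univ.filter fun j => j ∉ used ∧ wd ≤ τ j).inf' hne c) := by
      rw [← h]; exact Finset.min'_mem _ _
    have := (Finset.mem_filter.mp hmem).1
    simpa using this
  · simp [hne] at h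

lemma cfmPick_none {m : ℕ} {τ : Fin m → ℕ} {c : Fin m → ℝ} {used : Finset (Fin m)} {wd : ℕ}
    (h : cfmPick τ c used wd = none) : ∀ i : Fin m, wd ≤ τ i → i ∈ used := by
  unfold cfmPick at h
  by_cases hne : (Finset.univ.filter fun j => j ∉ used ∧ wd ≤ τ j).Nonempty
  · simp [hne] at h
  · intro i hi
    by_contra hcon
    exact hne ⟨i, Finset.mem_filter.mpr ⟨Finset.mem_univ _, hcon, hi⟩⟩


def gsmStep {m n : ℕ} (τ : Fin m → ℕ) (w : Fin n → ℕ)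
    (M : Finset (Fin m × Fin n)) (d : Fin n) : Finset (Fin m × Fin n) :=
  match gsmPick τ (M.image Prod.fst) (w d) with
  | some i => insert (i, d) M
  | none => M

noncomputable def cfmStep {m n : ℕ} (τ : Fin m → ℕ) (c : Fin m → ℝ) (w : Fin n → ℕ)
    (M : Finset (Fin m × Fin n)) (d : Fin n) : Finset (Fin m × Fin n) :=
  match cfmPick τ c (M.image Prod.fst) (w d) with
  | some i => insert (i, d) M
  | none => M

/-- Invariants maintained along the parallel run. -/
structure RunInv {m n : ℕ} (τ : Fin m → ℕ) (w : Fin n → ℕ)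
    (G C : Finset (Fin m × Fin n)) (l : List (Fin n)) : Prop where
  feasG : ∀ p ∈ G, w p.2 ≤ τ p.1
  feasC : ∀ p ∈ C, w p.2 ≤ τ p.1
  freshG : ∀ p ∈ G, p.2 ∉ l
  freshC : ∀ p ∈ C, p.2 ∉ l
  fstInj : ∀ p ∈ G, ∀ q ∈ G, p.1 = q.1 → p = q
  sndInj : ∀ p ∈ G, ∀ q ∈ G, p.2 = q.2 → p = q
  couple : ∀ p ∈ G, p.1 ∈ C.image Prod.fst ∨ p.2 ∈ C.image Prod.snd

lemma run_inv {m n : ℕ} (τ : Fin m → ℕ) (c : Fin m → ℝ) (w : Fin n → ℕ) :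
    ∀ (l : List (Fin n)) (G C : Finset (Fin m × Fin n)), l.Nodup →
      RunInv τ w G C l →
      RunInv τ w (l.foldl (gsmStep τ w) G) (l.foldl (cfmStep τ c w) C) [] := by
  intro l
  induction l with
  | nil => intro G C _ h; exact h
  | cons d t ih =>
    intro G C hnd hinv
    simp only [List.foldl_cons]
    have hdt : d ∉ t := (List.nodup_cons.mp hnd).1
    have hndt : t.Nodup := (List.nodup_cons.mp hnd).2
    apply ih _ _ hndt
    -- establish invariant for one step
    have hGd : ∀ p ∈ G, p.2 ≠ d := fun p hp => by
      have := hinv.freshG p hp; simp at this; tauto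
    have hCd : ∀ p ∈ C, p.2 ≠ d := fun p hp => by
      have := hinv.freshC p hp; simp at this; tauto
    have hGt : ∀ p ∈ G, p.2 ∉ t := fun p hp => by
      have := hinv.freshG p hp; simp at this; tauto
    have hCt : ∀ p ∈ C, p.2 ∉ t := fun p hp => by
      have := hinv.freshC p hp; simp at this; tauto
    -- case on the CFM step
    have hCsub : C ⊆ cfmStep τ c w C d := by
      unfold cfmStep
      cases cfmPick τ c (C.image Prod.fst) (w d) with
      | some i => exact Finset.subset_insert _ _
      | none => exact subset_rfl
    have hCfeas : ∀ p ∈ cfmStep τ c w C d, w p.2 ≤ τ p.1 := by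
      unfold cfmStep
      cases hcp : cfmPick τ c (C.image Prod.fst) (w d) with
      | some i =>
        intro p hp
        rcases Finset.mem_insert.mp hp with h | h
        · subst h; exact (cfmPick_mem hcp).2
        · exact hinv.feasC p h
      | none => exact hinv.feasC
    have hCfresh : ∀ p ∈ cfmStep τ c w C d, p.2 ∉ t := by
      unfold cfmStep
      cases hcp : cfmPick τ c (C.image Prod.fst) (w d) with
      | some i =>
        intro p hp
        rcases Finset.mem_insert.mp hp with h | h
        · subst h; exact hdt
        · exact hCt p h
      | none => exact hCt
    -- coupling after a step: every old G pair still covered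
    have hcoupleOld : ∀ p ∈ G, p.1 ∈ (cfmStep τ c w C d).image Prod.fst ∨
        p.2 ∈ (cfmStep τ c w C d).image Prod.snd := by
      intro p hp
      rcases hinv.couple p hp with h | h
      · exact Or.inl (Finset.image_subset_image hCsub h)
      · exact Or.inr (Finset.image_subset_image hCsub h)
    -- new job d is covered by CFM step if CFM accepted; otherwise all feasible used
    have hnew : ∀ i : Fin m, w d ≤ τ i →
        i ∈ (cfmStep τ c w C d).image Prod.fst ∨
        d ∈ (cfmStep τ c w C d).image Prod.snd := by
      intro i hi
      unfold cfmStep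
      cases hcp : cfmPick τ c (C.image Prod.fst) (w d) with
      | some i' =>
        right
        exact Finset.mem_image.mpr ⟨(i', d), Finset.mem_insert_self _ _, rfl⟩
      | none =>
        left
        have := cfmPick_none hcp i hi
        exact this
    -- now case on GSM step
    unfold gsmStep
    cases hgp : gsmPick τ (G.image Prod.fst) (w d) with
    | none =>
      exact { feasG := hinv.feasG, feasC := hCfeas, freshG := hGt, freshC := hCfresh,
              fstInj := hinv.fstInj, sndInj := hinv.sndInj, couple := hcoupleOld }
    | some i =>
      obtain ⟨hiu, hif⟩ := gsmPick_mem hgp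
      have hiG : ∀ q ∈ G, q.1 ≠ i := by
        intro q hq h
        exact hiu (Finset.mem_image.mpr ⟨q, hq, h⟩)
      refine { feasG := ?_, feasC := hCfeas, freshG := ?_, freshC := hCfresh,
               fstInj := ?_, sndInj := ?_, couple := ?_ }
      · intro p hp
        rcases Finset.mem_insert.mp hp with h | h
        · subst h; exact hif
        · exact hinv.feasG p h
      · intro p hp
        rcases Finset.mem_insert.mp hp with h | h
        · subst h; exact hdt
        · exact hGt p h
      · intro p hp q hq hpq
        rcases Finset.mem_insert.mp hp with h | h <;> rcases Finset.mem_insert.mp hq with h' | h'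
        · rw [h, h']
        · subst h; exact absurd hpq.symm (hiG q h')
        · subst h'; exact absurd hpq (hiG p h)
        · exact hinv.fstInj p h q h' hpq
      · intro p hp q hq hpq
        rcases Finset.mem_insert.mp hp with h | h <;> rcases Finset.mem_insert.mp hq with h' | h'
        · rw [h, h']
        · subst h; exact absurd hpq.symm (hGd q h')
        · subst h'; exact absurd hpq (hGd p h)
        · exact hinv.sndInj p h q h' hpq
      · intro p hp
        rcases Finset.mem_insert.mp hp with h | h
        · subst h; exact hnew i hif
        · exact hcoupleOld p h

lemma card_le_two_mul {m n : ℕ} {G C : Finset (Fin m × Fin n)}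
    (fstInj : ∀ p ∈ G, ∀ q ∈ G, p.1 = q.1 → p = q)
    (sndInj : ∀ p ∈ G, ∀ q ∈ G, p.2 = q.2 → p = q)
    (couple : ∀ p ∈ G, ∃ q ∈ C, p.1 = q.1 ∨ p.2 = q.2) :
    G.card ≤ 2 * C.card := by
  classical
  set f : Fin m × Fin n → Fin m × Fin n :=
    fun p => if h : ∃ q ∈ C, p.1 = q.1 ∨ p.2 = q.2 then h.choose else p with hf
  have hmaps : ∀ p ∈ G, f p ∈ C := by
    intro p hp
    have h := couple p hp
    simp only [hf, dif_pos h]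
    exact h.choose_spec.1
  have hspec : ∀ p ∈ G, p.1 = (f p).1 ∨ p.2 = (f p).2 := by
    intro p hp
    have h := couple p hp
    simp only [hf, dif_pos h]
    exact h.choose_spec.2
  refine Finset.card_le_mul_card_image_of_maps_to hmaps 2 ?_
  intro b hb
  have hsub : (G.filter fun p => f p = b) ⊆
      (G.filter fun p => p.1 = b.1) ∪ (G.filter fun p => p.2 = b.2) := by
    intro p hp
    obtain ⟨hpG, hpb⟩ := Finset.mem_filter.mp hp
    rcases hspec p hpG with h | h
    · exact Finset.mem_union_left _ (Finset.mem_filter.mpr ⟨hpG, by rw [h, hpb]⟩)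
    · exact Finset.mem_union_right _ (Finset.mem_filter.mpr ⟨hpG, by rw [h, hpb]⟩)
  calc (G.filter fun p => f p = b).card
      ≤ ((G.filter fun p => p.1 = b.1) ∪ (G.filter fun p => p.2 = b.2)).card :=
        Finset.card_le_card hsub
    _ ≤ (G.filter fun p => p.1 = b.1).card + (G.filter fun p => p.2 = b.2).card :=
        Finset.card_union_le _ _
    _ ≤ 1 + 1 := by
        gcongr
        · apply Finset.card_le_one.mpr
          intro p hp q hq
          obtain ⟨hpG, hp1⟩ := Finset.mem_filter.mp hp
          obtain ⟨hqG, hq1⟩ := Finset.mem_filter.mp hq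
          exact fstInj p hpG q hqG (hp1.trans hq1.symm)
        · apply Finset.card_le_one.mpr
          intro p hp q hq
          obtain ⟨hpG, hp1⟩ := Finset.mem_filter.mp hp
          obtain ⟨hqG, hq1⟩ := Finset.mem_filter.mp hq
          exact sndInj p hpG q hqG (hp1.trans hq1.symm)
    _ = 2 := rfl

lemma part1 {m n : ℕ} (τ : Fin m → ℕ) (c : Fin m → ℝ) (w : Fin n → ℕ)
    (ds : List (Fin n)) (hds : ds.Perm (List.finRange n)) :
    feasCount τ w (gsmRunOn τ w ds) - feasCount τ w (cfmRunOn τ c w ds) ≤ n / 2 := by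
  have hrunG : gsmRunOn τ w ds = ds.foldl (gsmStep τ w) ∅ := rfl
  have hrunC : cfmRunOn τ c w ds = ds.foldl (cfmStep τ c w) ∅ := rfl
  have hnd : ds.Nodup := hds.nodup_iff.mpr (List.nodup_finRange n)
  have hinv0 : RunInv τ w (∅ : Finset (Fin m × Fin n)) ∅ ds :=
    { feasG := by simp, feasC := by simp, freshG := by simp, freshC := by simp,
      fstInj := by simp, sndInj := by simp, couple := by simp }
  have hinv := run_inv τ c w ds ∅ ∅ hnd hinv0
  rw [hrunG, hrunC]
  set G := ds.foldl (gsmStep τ w) ∅ with hG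
  set C := ds.foldl (cfmStep τ c w) ∅ with hC
  have hfG : feasCount τ w G = G.card := by
    unfold feasCount
    rw [Finset.filter_true_of_mem hinv.feasG]
  have hfC : feasCount τ w C = C.card := by
    unfold feasCount
    rw [Finset.filter_true_of_mem hinv.feasC]
  have hGn : G.card ≤ n := by
    have := Finset.card_le_card_of_injOn Prod.snd
      (fun p _ => Finset.mem_univ p.2)
      (fun p hp q hq h => hinv.sndInj p hp q hq h)
    simpa using this
  have hG2C : G.card ≤ 2 * C.card := by
    apply card_le_two_mul hinv.fstInj hinv.sndInj
    intro p hp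
    rcases hinv.couple p hp with h | h
    · obtain ⟨q, hq, hq1⟩ := Finset.mem_image.mp h
      exact ⟨q, hq, Or.inl hq1.symm⟩
    · obtain ⟨q, hq, hq1⟩ := Finset.mem_image.mp h
      exact ⟨q, hq, Or.inr hq1.symm⟩
  rw [hfG, hfC]
  omega

lemma gsmPick_eq_some {m : ℕ} {τ : Fin m → ℕ} {used : Finset (Fin m)} {wd : ℕ} {i : Fin m}
    (h1 : i ∉ used) (h2 : wd ≤ τ i)
    (hmin : ∀ j : Fin m, j ∉ used → wd ≤ τ j → i ≤ j) :
    gsmPick τ used wd = some i := by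
  unfold gsmPick
  have hi : i ∈ Finset.univ.filter fun j => j ∉ used ∧ wd ≤ τ j :=
    Finset.mem_filter.mpr ⟨Finset.mem_univ _, h1, h2⟩
  have hne : (Finset.univ.filter fun j => j ∉ used ∧ wd ≤ τ j).Nonempty := ⟨i, hi⟩
  simp only [hne, dite_true, Option.some.injEq]
  apply le_antisymm
  · exact Finset.min'_le _ _ hi
  · apply Finset.le_min'
    intro y hy
    obtain ⟨-, hy1, hy2⟩ := Finset.mem_filter.mp hy
    exact hmin y hy1 hy2

lemma cfmPick_eq_some {m : ℕ} {τ : Fin m → ℕ} {c : Fin m → ℝ} {used : Finset (Fin m)}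
    {wd : ℕ} {i : Fin m}
    (anti : ∀ a b : Fin m, a < b → c b < c a)
    (h1 : i ∉ used) (h2 : wd ≤ τ i)
    (hmax : ∀ j : Fin m, j ∉ used → wd ≤ τ j → j ≤ i) :
    cfmPick τ c used wd = some i := by
  unfold cfmPick
  set s := Finset.univ.filter fun j => j ∉ used ∧ wd ≤ τ j with hs
  have hi : i ∈ s := Finset.mem_filter.mpr ⟨Finset.mem_univ _, h1, h2⟩
  have hne : s.Nonempty := ⟨i, hi⟩
  have hle : ∀ j ∈ s, j ≤ i := by
    intro j hj
    obtain ⟨-, hj1, hj2⟩ := Finset.mem_filter.mp hj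
    exact hmax j hj1 hj2
  have hinf : s.inf' hne c = c i := by
    apply le_antisymm
    · exact Finset.inf'_le _ hi
    · apply Finset.le_inf'
      intro j hj
      rcases lt_or_eq_of_le (hle j hj) with h | h
      · exact le_of_lt (anti j i h)
      · rw [h]
  have hfilter : (s.filter fun j => c j = s.inf' hne c) = {i} := by
    apply Finset.eq_singleton_iff_unique_mem.mpr
    constructor
    · exact Finset.mem_filter.mpr ⟨hi, hinf.symm⟩
    · intro j hj
      obtain ⟨hjs, hjc⟩ := Finset.mem_filter.mp hj
      rcases lt_or_eq_of_le (hle j hjs) with h | h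
      · exact absurd (hjc.trans hinf) (ne_of_gt (anti j i h))
      · exact h
  simp only [dif_pos (show (Finset.univ.filter fun j => j ∉ used ∧ wd ≤ τ j).Nonempty from hne), Option.some.injEq]
  have hmem : (s.filter fun j => c j = s.inf' hne c).min' (by
        obtain ⟨j, hj, hjc⟩ := Finset.exists_mem_eq_inf' hne c
        exact ⟨j, Finset.mem_filter.mpr ⟨hj, hjc.symm⟩⟩) ∈
      (s.filter fun j => c j = s.inf' hne c) := Finset.min'_mem _ _
  have hsub : (s.filter fun j => c j = s.inf' hne c) ⊆ {i} := by rw [hfilter]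
  exact Finset.mem_singleton.mp (hsub hmem)

lemma cfmPick_eq_none {m : ℕ} {τ : Fin m → ℕ} {c : Fin m → ℝ} {used : Finset (Fin m)}
    {wd : ℕ} (h : ∀ i : Fin m, wd ≤ τ i → i ∈ used) :
    cfmPick τ c used wd = none := by
  unfold cfmPick
  have hne : ¬ (Finset.univ.filter fun j => j ∉ used ∧ wd ≤ τ j).Nonempty := by
    rintro ⟨j, hj⟩
    obtain ⟨-, hj1, hj2⟩ := Finset.mem_filter.mp hj
    exact hj1 (h j hj2)
  simp [hne]

lemma foldl_finRange_inv {N : ℕ} {β : Type*} (f : β → Fin N → β) (b0 : β)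
    (P : ℕ → β → Prop) (h0 : P 0 b0)
    (hstep : ∀ j (hj : j < N) b, P j b → P (j + 1) (f b ⟨j, hj⟩)) :
    P N ((List.finRange N).foldl f b0) := by
  have key : ∀ j, j ≤ N → P j (((List.finRange N).take j).foldl f b0) := by
    intro j
    induction j with
    | zero => intro _; simpa using h0
    | succ i ih =>
      intro hij
      have hiN : i < N := hij
      have htake : (List.finRange N).take (i + 1) =
          (List.finRange N).take i ++ [⟨i, hiN⟩] := by
        rw [List.take_succ]
        congr 1
        rw [List.getElem?_eq_getElem (by simpa using hiN)]
        simp [List.getElem_finRange, Fin.ext_iff]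
      rw [htake, List.foldl_append]
      exact hstep i hiN _ (ih (le_of_lt hij))
  have := key N le_rfl
  rwa [List.take_of_length_le (by simp)] at this

def tauA (μ : ℕ) : Fin μ → ℕ := fun i => i
noncomputable def cstA (μ : ℕ) : Fin μ → ℝ := fun i => (μ : ℝ) - (i : ℝ)
def wtA (μ k : ℕ) : Fin (2 * k) → ℕ :=
  fun d => if (d : ℕ) < k then 0 else μ - 1 - ((d : ℕ) - k)

lemma gsm_eval (μ k : ℕ) (h2k : 2 * k ≤ μ) :
    (gsmRunOn (tauA μ) (wtA μ k) (List.finRange (2 * k))).card = 2 * k ∧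
    ∀ p ∈ gsmRunOn (tauA μ) (wtA μ k) (List.finRange (2 * k)),
      wtA μ k p.2 ≤ tauA μ p.1 := by
  have hrun : gsmRunOn (tauA μ) (wtA μ k) (List.finRange (2 * k)) =
      (List.finRange (2 * k)).foldl (gsmStep (tauA μ) (wtA μ k)) ∅ := rfl
  rw [hrun]
  have key := foldl_finRange_inv (gsmStep (tauA μ) (wtA μ k)) ∅
    (fun j M => M.image Prod.fst =
        (Finset.univ.filter fun i : Fin μ => (i : ℕ) < min j k ∨ μ ≤ (i : ℕ) + (j - k)) ∧
      M.card = j ∧ ∀ p ∈ M, wtA μ k p.2 ≤ tauA μ p.1)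
    (by
      refine ⟨?_, by simp, by simp⟩
      ext i
      have := i.isLt
      simp only [Finset.image_empty, Finset.notMem_empty, Finset.mem_filter,
        Finset.mem_univ, true_and, false_iff]
      omega)
    (by
      intro j hj M hM
      obtain ⟨him, hcard, hfeas⟩ := hM
      have hwd : wtA μ k (⟨j, hj⟩ : Fin (2 * k)) =
          if j < k then 0 else μ - 1 - (j - k) := rfl
      have hvb : (if j < k then j else μ - 1 - (j - k)) < μ := by split <;> omega
      set v : Fin μ := ⟨if j < k then j else μ - 1 - (j - k), hvb⟩ with hv
      have hwv : wtA μ k (⟨j, hj⟩ : Fin (2 * k)) ≤ tauA μ v := by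
        rw [hwd]
        show _ ≤ (v : ℕ)
        rw [hv]
        split <;> simp
      have hpick : gsmPick (tauA μ) (M.image Prod.fst) (wtA μ k ⟨j, hj⟩) = some v := by
        rw [him]
        apply gsmPick_eq_some
        · simp only [Finset.mem_filter, Finset.mem_univ, true_and, hv]
          push_neg
          constructor <;> split <;> omega
        · exact hwv
        · intro x hx hfx
          simp only [Finset.mem_filter, Finset.mem_univ, true_and] at hx
          push_neg at hx
          rw [Fin.le_def]
          show (if j < k then j else μ - 1 - (j - k)) ≤ (x : ℕ)
          rw [hwd] at hfx
          have hfx' : (if j < k then 0 else μ - 1 - (j - k)) ≤ (x : ℕ) := hfx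
          split <;> [skip; (split at hfx' <;> omega)]
          omega
      have hstepeq : gsmStep (tauA μ) (wtA μ k) M ⟨j, hj⟩ = insert (v, ⟨j, hj⟩) M := by
        unfold gsmStep
        rw [hpick]
      rw [hstepeq]
      have hvnot : v ∉ M.image Prod.fst := by
        rw [him]
        simp only [Finset.mem_filter, Finset.mem_univ, true_and, hv]
        push_neg
        constructor <;> split <;> omega
      refine ⟨?_, ?_, ?_⟩
      · rw [Finset.image_insert, him]
        ext i
        have := i.isLt
        simp only [Finset.mem_insert, Finset.mem_filter, Finset.mem_univ, true_and,
          Fin.ext_iff, hv]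
        split <;> omega
      · rw [Finset.card_insert_of_notMem, hcard]
        intro hmem
        exact hvnot (Finset.mem_image.mpr ⟨_, hmem, rfl⟩)
      · intro p hp
        rcases Finset.mem_insert.mp hp with h | h
        · rw [h]; exact hwv
        · exact hfeas p h)
  exact ⟨key.2.1, key.2.2⟩

lemma cst_anti (μ : ℕ) : ∀ a b : Fin μ, a < b → cstA μ b < cstA μ a := by
  intro a b h
  have : (a : ℝ) < (b : ℝ) := by exact_mod_cast h
  unfold cstA
  linarith

lemma cfm_eval (μ k : ℕ) (h2k : 2 * k ≤ μ) :
    (cfmRunOn (tauA μ) (cstA μ) (wtA μ k) (List.finRange (2 * k))).card = k ∧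
    ∀ p ∈ cfmRunOn (tauA μ) (cstA μ) (wtA μ k) (List.finRange (2 * k)),
      wtA μ k p.2 ≤ tauA μ p.1 := by
  have hrun : cfmRunOn (tauA μ) (cstA μ) (wtA μ k) (List.finRange (2 * k)) =
      (List.finRange (2 * k)).foldl (cfmStep (tauA μ) (cstA μ) (wtA μ k)) ∅ := rfl
  rw [hrun]
  have key := foldl_finRange_inv (cfmStep (tauA μ) (cstA μ) (wtA μ k)) ∅
    (fun j M => M.image Prod.fst =
        (Finset.univ.filter fun i : Fin μ => μ ≤ (i : ℕ) + min j k) ∧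
      M.card = min j k ∧ ∀ p ∈ M, wtA μ k p.2 ≤ tauA μ p.1)
    (by
      refine ⟨?_, by simp, by simp⟩
      ext i
      have := i.isLt
      simp only [Finset.image_empty, Finset.notMem_empty, Finset.mem_filter,
        Finset.mem_univ, true_and, false_iff]
      omega)
    (by
      intro j hj M hM
      obtain ⟨him, hcard, hfeas⟩ := hM
      have hwd : wtA μ k (⟨j, hj⟩ : Fin (2 * k)) =
          if j < k then 0 else μ - 1 - (j - k) := rfl
      by_cases hjk : j < k
      · -- phase 1: CFM picks provider μ - 1 - j
        have hvb : μ - 1 - j < μ := by omega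
        set v : Fin μ := ⟨μ - 1 - j, hvb⟩ with hv
        have hwv : wtA μ k (⟨j, hj⟩ : Fin (2 * k)) ≤ tauA μ v := by
          rw [hwd]
          simp [hjk]
        have hpick : cfmPick (tauA μ) (cstA μ) (M.image Prod.fst) (wtA μ k ⟨j, hj⟩)
            = some v := by
          rw [him]
          apply cfmPick_eq_some (cst_anti μ)
          · simp only [Finset.mem_filter, Finset.mem_univ, true_and, hv]
            omega
          · exact hwv
          · intro x hx _
            simp only [Finset.mem_filter, Finset.mem_univ, true_and] at hx
            have := x.isLt
            rw [Fin.le_def]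
            show (x : ℕ) ≤ μ - 1 - j
            omega
        have hstepeq : cfmStep (tauA μ) (cstA μ) (wtA μ k) M ⟨j, hj⟩
            = insert (v, ⟨j, hj⟩) M := by
          unfold cfmStep
          rw [hpick]
        rw [hstepeq]
        have hvnot : v ∉ M.image Prod.fst := by
          rw [him]
          simp only [Finset.mem_filter, Finset.mem_univ, true_and, hv]
          omega
        refine ⟨?_, ?_, ?_⟩
        · rw [Finset.image_insert, him]
          ext i
          have := i.isLt
          simp only [Finset.mem_insert, Finset.mem_filter, Finset.mem_univ, true_and,
            Fin.ext_iff, hv]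
          omega
        · rw [Finset.card_insert_of_notMem, hcard]
          · omega
          · intro hmem
            exact hvnot (Finset.mem_image.mpr ⟨_, hmem, rfl⟩)
        · intro p hp
          rcases Finset.mem_insert.mp hp with h | h
          · rw [h]; exact hwv
          · exact hfeas p h
      · -- phase 2: CFM rejects
        have hpick : cfmPick (tauA μ) (cstA μ) (M.image Prod.fst) (wtA μ k ⟨j, hj⟩)
            = none := by
          rw [him]
          apply cfmPick_eq_none
          intro x hfx
          simp only [Finset.mem_filter, Finset.mem_univ, true_and]
          rw [hwd] at hfx
          have hfx' : (if j < k then 0 else μ - 1 - (j - k)) ≤ (x : ℕ) := hfx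
          rw [if_neg hjk] at hfx'
          omega
        have hstepeq : cfmStep (tauA μ) (cstA μ) (wtA μ k) M ⟨j, hj⟩ = M := by
          unfold cfmStep
          rw [hpick]
        rw [hstepeq]
        refine ⟨?_, ?_, hfeas⟩
        · rw [him]
          ext i
          simp only [Finset.mem_filter, Finset.mem_univ, true_and]
          omega
        · omega)
  refine ⟨?_, key.2.2⟩
  rw [key.2.1]
  omega


/-- for providers with nondecreasing availabilities and arbitrary
costs, and `n ≤ m` jobs arriving online in an adversarial order, the D-regret of
CFM relative to GSM satisfies `|M_GSM| − |M_CFM,feasible| ≤ ⌊n/2⌋`; moreover the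
bound is tight up to the floor: under strictly anti-sorted costs (larger
availability implies strictly smaller cost) an adversary can realize exactly
`⌊m/2⌋` units of regret. -/
theorem cfm_regret_at_most_half
    {m n : ℕ} (hnm : n ≤ m) (τ : Fin m → ℕ) (hτ : Monotone τ)
    (c : Fin m → ℝ) (w : Fin n → ℕ)
    (ds : List (Fin n)) (hds : ds.Perm (List.finRange n)) :
    feasCount τ w (gsmRunOn τ w ds) - feasCount τ w (cfmRunOn τ c w ds) ≤ n / 2 ∧
    ∀ m' : ℕ, ∃ (n' : ℕ) (τ' : Fin m' → ℕ) (c' : Fin m' → ℝ) (w' : Fin n' → ℕ),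
      n' ≤ m' ∧ Monotone τ' ∧
      (∀ i j : Fin m', τ' i < τ' j → c' j < c' i) ∧
      feasCount τ' w' (gsmRunOn τ' w' (List.finRange n'))
        = feasCount τ' w' (cfmRunOn τ' c' w' (List.finRange n')) + m' / 2 := by
  constructor
  · exact part1 τ c w ds hds
  · intro μ
    refine ⟨2 * (μ / 2), tauA μ, cstA μ, wtA μ (μ / 2), by omega, fun a b h => h,
      ?_, ?_⟩
    · intro i j h
      exact cst_anti μ i j h
    · have h2k : 2 * (μ / 2) ≤ μ := by omega
      obtain ⟨hgc, hgf⟩ := gsm_eval μ (μ / 2) h2k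
      obtain ⟨hcc, hcf⟩ := cfm_eval μ (μ / 2) h2k
      have e1 : feasCount (tauA μ) (wtA μ (μ / 2))
          (gsmRunOn (tauA μ) (wtA μ (μ / 2)) (List.finRange (2 * (μ / 2))))
          = 2 * (μ / 2) := by
        unfold feasCount
        rw [Finset.filter_true_of_mem hgf, hgc]
      have e2 : feasCount (tauA μ) (wtA μ (μ / 2))
          (cfmRunOn (tauA μ) (cstA μ) (wtA μ (μ / 2)) (List.finRange (2 * (μ / 2))))
          = μ / 2 := by
        unfold feasCount
        rw [Finset.filter_true_of_mem hcf, hcc]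
      rw [e1, e2]
      omega
end

section
/- Let a > b ≥ 1 be natural numbers with gcd(a, b) = 1, and define f(t) = a − (t mod a) ∈ {1, …, a} and g(t) = b − (t mod b) ∈ {1, …, b}. Then the set {t ∈ {0, 1, …, ab − 1} : f(t) = g(t) + 1} has exactly b elements, and these solutions form a single contiguous block modulo the hyper-period ab = lcm(a,b): there exists t₀ ∈ ℕ such that for all t ∈ ℕ, f(t) = g(t) + 1 if and only if t ≡ t₀ + j (mod ab) for some j ∈ {0, 1, …, b − 1}. Along this block the pairs (f(t), g(t)) take the consecutive values (b+1, b), (b, b−1), …, (2, 1). -/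
/-!
With `c = a - b - 1`, the gap-one condition `a - t % a = b - t % b + 1` says exactly
`t % a = c + t % b`. By the Chinese remainder theorem pick `t₀ ≡ c [MOD a]`, `t₀ ≡ 0 [MOD b]`;
since `c + b ≤ a` no wrap-around occurs, so `t₀ + j` has residues `(c + j, j)` for `j < b`,
and these are precisely the residue pairs satisfying the condition.
-/

open Finset

theorem sub_mod_eq_sub_mod_add_one_iff {a b : ℕ} (hb : 0 < b) (hba : b < a) (t : ℕ) :
    a - t % a = b - t % b + 1 ↔ t % a = a - b - 1 + t % b := by
  have := Nat.mod_lt t hb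
  have := Nat.mod_lt t (hb.trans hba)
  omega

section Block

variable {a b c t₀ j : ℕ}

theorem add_mod_of_modEq_of_modEq_zero (h₀a : t₀ ≡ c [MOD a]) (h₀b : t₀ ≡ 0 [MOD b])
    (hja : c + j < a) (hjb : j < b) :
    (t₀ + j) % a = c + j ∧ (t₀ + j) % b = j :=
  ⟨Eq.trans (h₀a.add_right j) (Nat.mod_eq_of_lt hja),
    Eq.trans (h₀b.add_right j) (by rw [zero_add, Nat.mod_eq_of_lt hjb])⟩

theorem mod_eq_add_mod_iff_exists_modEq_add (hab : Nat.Coprime a b) (hb : 0 < b) (hcb : c + b ≤ a)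
    (h₀a : t₀ ≡ c [MOD a]) (h₀b : t₀ ≡ 0 [MOD b]) (t : ℕ) :
    t % a = c + t % b ↔ ∃ j < b, t ≡ t₀ + j [MOD a * b] := by
  simp only [← Nat.modEq_and_modEq_iff_modEq_mul hab]
  constructor
  · intro ht
    have hjb : t % b < b := Nat.mod_lt t hb
    obtain ⟨hmoda, hmodb⟩ := add_mod_of_modEq_of_modEq_zero h₀a h₀b (by omega) hjb
    exact ⟨t % b, hjb, ht.trans hmoda.symm, hmodb.symm⟩
  · rintro ⟨j, hjb, hta, htb⟩
    obtain ⟨hmoda, hmodb⟩ := add_mod_of_modEq_of_modEq_zero h₀a h₀b (by omega) hjb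
    rw [Nat.ModEq] at hta htb
    omega

end Block

theorem card_filter_modEq_add_lt {n b : ℕ} (hbn : b ≤ n) (s : ℕ) :
    ((range n).filter fun t => ∃ j < b, t ≡ s + j [MOD n]).card = b := by
  have himage : (range n).filter (fun t => ∃ j < b, t ≡ s + j [MOD n]) =
      (range b).image fun j => (s + j) % n := by
    ext t
    simp only [mem_filter, mem_range, mem_image]
    constructor
    · rintro ⟨htn, j, hjb, ht⟩
      exact ⟨j, hjb, Eq.trans ht.symm (Nat.mod_eq_of_lt htn)⟩
    · rintro ⟨j, hjb, rfl⟩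
      exact ⟨Nat.mod_lt _ (by omega), j, hjb, Nat.mod_modEq _ _⟩
  rw [himage, card_image_of_injOn, card_range]
  intro j₁ hj₁ j₂ hj₂ h
  simp only [coe_range, Set.mem_Iio] at hj₁ hj₂
  exact (Nat.ModEq.add_left_cancel' s h).eq_of_lt_of_lt (by omega) (by omega)

/-- for cyclic countdowns `f(t) = a − (t mod a)` and
`g(t) = b − (t mod b)` with `a > b ≥ 1` coprime, the gap-1 window
`f(t) = g(t) + 1` occurs for exactly `b` of the times `t ∈ {0,…,ab−1}`, these
times form a single contiguous block modulo the hyper-period `ab = lcm(a,b)`,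
and along the block the pairs `(f,g)` take the consecutive values
`(b+1, b), (b, b−1), …, (2, 1)`. -/
theorem gap_one_window_block (a b : ℕ) (hba : b < a) (hb : 1 ≤ b)
    (hgcd : Nat.gcd a b = 1) :
    ((Finset.range (a * b)).filter fun t => a - t % a = (b - t % b) + 1).card = b ∧
    ∃ t₀ : ℕ,
      (∀ t : ℕ, (a - t % a = (b - t % b) + 1 ↔
        ∃ j : ℕ, j < b ∧ t ≡ t₀ + j [MOD a * b])) ∧
      (∀ j : ℕ, j < b →
        a - (t₀ + j) % a = b + 1 - j ∧ b - (t₀ + j) % b = b - j) := by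
  obtain ⟨t₀, h₀a, h₀b⟩ := Nat.chineseRemainder hgcd (a - b - 1) 0
  have hblock (t : ℕ) : a - t % a = b - t % b + 1 ↔ ∃ j < b, t ≡ t₀ + j [MOD a * b] :=
    (sub_mod_eq_sub_mod_add_one_iff hb hba t).trans
      (mod_eq_add_mod_iff_exists_modEq_add hgcd hb (by omega) h₀a h₀b t)
  refine ⟨?_, t₀, hblock, fun j hj => ?_⟩
  · rw [filter_congr fun t _ => hblock t]
    exact card_filter_modEq_add_lt (Nat.le_mul_of_pos_left b (by omega)) t₀
  · obtain ⟨hmoda, hmodb⟩ := add_mod_of_modEq_of_modEq_zero h₀a h₀b (by omega) hj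
    rw [hmoda, hmodb]
    omega
end
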